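/- Let p, q, k be positive integers with p > 2, q > kp + 2, and e = p(q−k). Then for every a with 0 ≤ a ≤ k−1, ρ(K^±_{p,q−k}) > ρ(ᵉK_{p,q−a}). -/

import Mathlib

open Matrix

noncomputable def specRad {n : Type*} [Fintype n] [DecidableEq n] (M : Matrix n n ℝ) : ℝ :=
  sSup (spectrum ℝ M)


/-- Ferrers (chain) bipartite adjacency matrix for degree sequence `d` with `q'` columns. -/
noncomputable def adjD (p q' : ℕ) (d : Fin p → ℕ) :
    Matrix (Fin p ⊕ Fin q') (Fin p ⊕ Fin q') ℝ :=
  Matrix.fromBlocks 0 (Matrix.of fun i j => if (j : ℕ) < d i then 1 else 0)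
    (Matrix.of fun (i : Fin p) (j : Fin q') => if (j : ℕ) < d i then (1:ℝ) else 0)ᵀ 0

/-- Degree sequence of `K^±_{p,q-k}`: `(q-k+1, (q-k)^{p-2}, q-k-1)`. -/
def dStar (p q k : ℕ) : Fin p → ℕ :=
  fun i => if (i : ℕ) = 0 then q - k + 1 else if (i : ℕ) = p - 1 then q - k - 1 else q - k

/-- Degree sequence of `ᵉK_{p,q-a}`: `((q-a)^{p-1}, q-a-(k-a)p)`. -/
def dKa (p q k a : ℕ) : Fin p → ℕ :=
  fun i => if (i : ℕ) < p - 1 then q - a else q - a - (k - a) * p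

/-! ### Auxiliary material -/

open Finset

noncomputable def Bmat (p q' : ℕ) (d : Fin p → ℕ) : Matrix (Fin p) (Fin q') ℝ :=
  Matrix.of fun i j => if (j : ℕ) < d i then 1 else 0

lemma adjD_eq (p q' : ℕ) (d : Fin p → ℕ) :
    adjD p q' d = Matrix.fromBlocks 0 (Bmat p q' d) (Bmat p q' d)ᵀ 0 := rfl

lemma mem_spec_iff {n : Type*} [Fintype n] [DecidableEq n] (M : Matrix n n ℝ) (μ : ℝ) :
    μ ∈ spectrum ℝ M ↔ ∃ v, v ≠ 0 ∧ M.mulVec v = μ • v := by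
  rw [spectrum.mem_iff, Matrix.isUnit_iff_isUnit_det, isUnit_iff_ne_zero, not_ne_iff,
    ← Matrix.exists_mulVec_eq_zero_iff]
  have key : ∀ v : n → ℝ, (algebraMap ℝ (Matrix n n ℝ) μ - M).mulVec v = μ • v - M.mulVec v := by
    intro v
    rw [Matrix.sub_mulVec, Algebra.algebraMap_eq_smul_one, Matrix.smul_mulVec,
      Matrix.one_mulVec]
  apply exists_congr
  intro v
  rw [key, sub_eq_zero]
  tauto

lemma spec_bddAbove {n : Type*} [Fintype n] [DecidableEq n] (M : Matrix n n ℝ) :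
    BddAbove (spectrum ℝ M) := (Matrix.finite_spectrum M).bddAbove

lemma sum_min (q' a c : ℕ) (ha : a ≤ q') :
    ∑ j : Fin q', (if (j : ℕ) < a then (1:ℝ) else 0) * (if (j : ℕ) < c then 1 else 0)
      = (min a c : ℕ) := by
  rw [Fin.sum_univ_eq_sum_range (fun j => (if j < a then (1:ℝ) else 0) * (if j < c then 1 else 0))]
  have h1 : ∀ j ∈ Finset.range q',
      (if j < a then (1:ℝ) else 0) * (if j < c then 1 else 0)
        = if j ∈ Finset.range (min a c) then (1:ℝ) else 0 := by
    intro j _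
    by_cases h1 : j < a <;> by_cases h2 : j < c <;>
      simp [h1, h2, Finset.mem_range, lt_min_iff]
  rw [Finset.sum_congr rfl h1, Finset.sum_ite_mem, Finset.inter_eq_right.mpr
    (Finset.range_subset_range.mpr (le_trans (min_le_left a c) ha))]
  simp

lemma BBt_mulVec (p q' : ℕ) (d : Fin p → ℕ) (hd : ∀ i, d i ≤ q') (u : Fin p → ℝ) (i : Fin p) :
    ((Bmat p q' d) * (Bmat p q' d)ᵀ).mulVec u i
      = ∑ i', ((min (d i) (d i') : ℕ) : ℝ) * u i' := by
  rw [Matrix.mulVec]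
  simp only [dotProduct, Matrix.mul_apply, Matrix.transpose_apply, Bmat, Matrix.of_apply]
  congr 1
  ext i'
  rw [sum_min q' (d i) (d i') (hd i)]

lemma descend (p q' : ℕ) (d : Fin p → ℕ) (hd : ∀ i, d i ≤ q') {lam : ℝ} (hlam : lam ≠ 0)
    (h : lam ∈ spectrum ℝ (adjD p q' d)) :
    ∃ u : Fin p → ℝ, u ≠ 0 ∧
      ∀ i, lam ^ 2 * u i = ∑ i', ((min (d i) (d i') : ℕ) : ℝ) * u i' := by
  obtain ⟨v, hv, hAv⟩ := (mem_spec_iff _ _).mp h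
  set u : Fin p → ℝ := fun i => v (Sum.inl i) with hu
  set w : Fin q' → ℝ := fun j => v (Sum.inr j) with hw
  have hv' : v = Sum.elim u w := by ext (i | j) <;> rfl
  rw [adjD_eq, hv', Matrix.fromBlocks_mulVec] at hAv
  simp only [Matrix.zero_mulVec, zero_add, add_zero] at hAv
  have hBw : (Bmat p q' d).mulVec w = lam • u := by
    funext i; exact congrFun hAv (Sum.inl i)
  have hBtu : (Bmat p q' d)ᵀ.mulVec u = lam • w := by
    funext j; exact congrFun hAv (Sum.inr j)
  have hune : u ≠ 0 := by
    intro h0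
    apply hv
    have : w = 0 := by
      have : lam • w = 0 := by rw [← hBtu, h0, Matrix.mulVec_zero]
      simpa [hlam] using this
    rw [hv', h0, this]; ext (i | j) <;> rfl
  refine ⟨u, hune, fun i => ?_⟩
  have : ((Bmat p q' d) * (Bmat p q' d)ᵀ).mulVec u = (lam ^ 2) • u := by
    rw [← Matrix.mulVec_mulVec, hBtu, Matrix.mulVec_smul, hBw]
    funext i; simp [smul_smul]; ring
  rw [← BBt_mulVec p q' d hd u i, this]
  simp

lemma ascend (p q' : ℕ) (d : Fin p → ℕ) (hd : ∀ i, d i ≤ q') {mu : ℝ} (hmu : 0 < mu)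
    (u : Fin p → ℝ) (hu : u ≠ 0)
    (h : ∀ i, mu * u i = ∑ i', ((min (d i) (d i') : ℕ) : ℝ) * u i') :
    Real.sqrt mu ∈ spectrum ℝ (adjD p q' d) := by
  have hBBt : ((Bmat p q' d) * (Bmat p q' d)ᵀ).mulVec u = mu • u := by
    funext i; rw [BBt_mulVec p q' d hd u i, ← h i]; rfl
  refine (mem_spec_iff _ _).mpr ⟨Sum.elim (Real.sqrt mu • u) ((Bmat p q' d)ᵀ.mulVec u), ?_, ?_⟩
  · intro h0
    apply hu
    have h1 : Real.sqrt mu • u = 0 := by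
      funext i; exact congrFun h0 (Sum.inl i)
    have : Real.sqrt mu ≠ 0 := ne_of_gt (Real.sqrt_pos.mpr hmu)
    simpa [this] using h1
  · rw [adjD_eq, Matrix.fromBlocks_mulVec]
    simp only [Matrix.zero_mulVec, zero_add, add_zero, Sum.elim_comp_inl, Sum.elim_comp_inr]
    have h1 : (Bmat p q' d).mulVec ((Bmat p q' d)ᵀ.mulVec u) = mu • u := by
      rw [Matrix.mulVec_mulVec]; exact hBBt
    have h2 : (Bmat p q' d)ᵀ.mulVec (Real.sqrt mu • u)
        = Real.sqrt mu • (Bmat p q' d)ᵀ.mulVec u := Matrix.mulVec_smul _ _ _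
    rw [h1, h2]
    funext x
    cases x with
    | inl i =>
      simp only [Sum.elim_inl, Pi.smul_apply, smul_eq_mul]
      rw [← mul_assoc, Real.mul_self_sqrt hmu.le]
    | inr j => simp

lemma Ka_eigen (p q k a : ℕ) (hp : 2 < p) {lam : ℝ} (hlam : 0 < lam)
    (mR sR : ℝ) (hm : mR = ((q - a : ℕ) : ℝ)) (hs : sR = ((q - a - (k - a) * p : ℕ) : ℝ))
    (h : lam ∈ spectrum ℝ (adjD p (q - a) (dKa p q k a))) :
    (lam ^ 2) ^ 2 - (((p : ℝ) - 1) * mR + sR) * lam ^ 2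
      + ((p : ℝ) - 1) * sR * (mR - sR) = 0 := by
  have hd : ∀ i, dKa p q k a i ≤ q - a := by
    intro i; unfold dKa; split
    · exact le_refl _
    · exact Nat.sub_le _ _
  obtain ⟨u, hu, heq⟩ := descend p (q - a) _ hd (ne_of_gt hlam) h
  have hpL : p - 1 < p := by omega
  set L : Fin p := ⟨p - 1, hpL⟩ with hL
  have hmem : ∀ i : Fin p, i ∈ univ.erase L ↔ (i : ℕ) < p - 1 := by
    intro i
    simp only [Finset.mem_erase, Finset.mem_univ, and_true, Ne, Fin.ext_iff, hL, Fin.val_mk]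
    have := i.isLt
    constructor <;> intro h' <;> omega
  have hdval : ∀ i : Fin p, (i : ℕ) < p - 1 → dKa p q k a i = q - a := by
    intro i hi; simp [dKa, hi]
  have hdL : dKa p q k a L = q - a - (k - a) * p := by
    simp [dKa, hL]
  have hsm : q - a - (k - a) * p ≤ q - a := Nat.sub_le _ _
  set S : ℝ := ∑ i' ∈ univ.erase L, u i' with hS
  set y : ℝ := u L with hy
  have heq' : ∀ i : Fin p, lam ^ 2 * u i
      = (∑ i' ∈ univ.erase L, ((min (dKa p q k a i) (dKa p q k a i') : ℕ) : ℝ) * u i')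
        + ((min (dKa p q k a i) (dKa p q k a L) : ℕ) : ℝ) * u L := by
    intro i
    rw [heq i, ← Finset.sum_erase_add Finset.univ _ (Finset.mem_univ L)]
  have eq1 : ∀ i : Fin p, (i : ℕ) < p - 1 → lam ^ 2 * u i = mR * S + sR * y := by
    intro i hi
    rw [heq' i]
    congr 1
    · rw [hS, Finset.mul_sum]
      refine Finset.sum_congr rfl fun j hj => ?_
      rw [hdval i hi, hdval j ((hmem j).mp hj), min_self, hm]
    · rw [hdval i hi, hdL, min_eq_right hsm, hs]
  have eq2 : lam ^ 2 * y = sR * S + sR * y := by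
    rw [hy, heq' L]
    congr 1
    · rw [hS, Finset.mul_sum]
      refine Finset.sum_congr rfl fun j hj => ?_
      rw [hdL, hdval j ((hmem j).mp hj), min_eq_left hsm, hs]
    · rw [hdL, min_self, hs]
  have hcard : ((univ.erase L).card : ℝ) = (p : ℝ) - 1 := by
    rw [Finset.card_erase_of_mem (Finset.mem_univ L), Finset.card_univ, Fintype.card_fin]
    have : 1 ≤ p := by omega
    push_cast [Nat.cast_sub this]
    ring
  have eqS : lam ^ 2 * S = ((p : ℝ) - 1) * (mR * S + sR * y) := by
    rw [hS, Finset.mul_sum]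
    rw [Finset.sum_congr rfl fun j hj => eq1 j ((hmem j).mp hj)]
    rw [Finset.sum_const, nsmul_eq_mul, hcard]
  have hSy : ¬(S = 0 ∧ y = 0) := by
    rintro ⟨hS0, hy0⟩
    apply hu
    funext i
    by_cases hi : (i : ℕ) < p - 1
    · have := eq1 i hi
      rw [hS0, hy0] at this
      have h2 : lam ^ 2 ≠ 0 := pow_ne_zero _ (ne_of_gt hlam)
      simpa [h2] using this
    · have hiL : i = L := by
        apply Fin.ext
        have := i.isLt
        simp only [hL]
        omega
      rw [hiL]
      exact hy0
  set μ : ℝ := lam ^ 2 with hμ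
  have k1 : (μ ^ 2 - (((p:ℝ) - 1) * mR + sR) * μ + ((p:ℝ) - 1) * sR * (mR - sR)) * S = 0 := by
    linear_combination (μ - sR) * eqS + ((p:ℝ) - 1) * sR * eq2
  have k2 : (μ ^ 2 - (((p:ℝ) - 1) * mR + sR) * μ + ((p:ℝ) - 1) * sR * (mR - sR)) * y = 0 := by
    linear_combination (μ - ((p:ℝ) - 1) * mR) * eq2 + sR * eqS
  rcases not_and_or.mp hSy with hS0 | hy0
  · exact (mul_eq_zero.mp k1).resolve_right hS0
  · exact (mul_eq_zero.mp k2).resolve_right hy0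

lemma star_eigen (p q k : ℕ) (hp : 2 < p) (hqk : 5 ≤ q - k) {μ : ℝ} (hμ : 0 < μ)
    (T : ℝ) (hT : T = ((q - k : ℕ) : ℝ))
    (hroot : μ ^ 3 - (p : ℝ) * T * μ ^ 2 + (2 * (p : ℝ) * T - (p : ℝ) - 2 * T) * μ
      - ((p : ℝ) - 2) * (T - 1) = 0) :
    Real.sqrt μ ∈ spectrum ℝ (adjD p (q - k + 1) (dStar p q k)) := by
  have hT5 : (5 : ℝ) ≤ T := by rw [hT]; exact_mod_cast hqk
  have hT1 : T - 1 ≠ 0 := by linarith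
  have hd : ∀ i, dStar p q k i ≤ q - k + 1 := by
    intro i; unfold dStar
    split
    · exact le_refl _
    · split <;> omega
  have hpZ : 0 < p := by omega
  have hpL : p - 1 < p := by omega
  set Z : Fin p := ⟨0, hpZ⟩ with hZ
  set L : Fin p := ⟨p - 1, hpL⟩ with hL
  have hc1 : ((q - k + 1 : ℕ) : ℝ) = T + 1 := by rw [hT]; push_cast; ring
  have hc2 : ((q - k - 1 : ℕ) : ℝ) = T - 1 := by
    rw [hT]
    have : 1 ≤ q - k := by omega
    push_cast [Nat.cast_sub this]
    ring
  have hcp : ((p - 2 : ℕ) : ℝ) = (p : ℝ) - 2 := by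
    have : 2 ≤ p := by omega
    push_cast [Nat.cast_sub this]
    ring
  set zz : ℝ := (μ ^ 2 - μ - T * μ - T * ((p : ℝ) - 2) * (μ - 1)) / (T - 1) with hzz
  have hzzT : zz * (T - 1) = μ ^ 2 - μ - T * μ - T * ((p : ℝ) - 2) * (μ - 1) :=
    div_mul_cancel₀ _ hT1
  set u : Fin p → ℝ := fun i => if (i : ℕ) = 0 then μ else if (i : ℕ) = p - 1 then zz else μ - 1
    with hu
  have huZ : u Z = μ := by simp [hu, hZ]
  have huL : u L = zz := by
    simp only [hu, hL]
    have : p - 1 ≠ 0 := by omega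
    simp [this]
  have humid : ∀ i : Fin p, (i : ℕ) ≠ 0 → (i : ℕ) ≠ p - 1 → u i = μ - 1 := by
    intro i h1 h2; simp [hu, h1, h2]
  have hune : u ≠ 0 := by
    intro h0
    have : u Z = 0 := by rw [h0]; rfl
    rw [huZ] at this
    exact (ne_of_gt hμ) this
  have hdZ : dStar p q k Z = q - k + 1 := by simp [dStar, hZ]
  have hdL : dStar p q k L = q - k - 1 := by
    have h1 : p - 1 ≠ 0 := by omega
    simp [dStar, hL, h1]
  have hdmid : ∀ i : Fin p, (i : ℕ) ≠ 0 → (i : ℕ) ≠ p - 1 → dStar p q k i = q - k := by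
    intro i h1 h2; simp [dStar, h1, h2]
  have hZL : Z ≠ L := by
    simp only [hZ, hL, Ne, Fin.ext_iff]
    omega
  have hLmem : L ∈ univ.erase Z := Finset.mem_erase.mpr ⟨hZL.symm, Finset.mem_univ L⟩
  set mid : Finset (Fin p) := (univ.erase Z).erase L with hmid
  have hmidmem : ∀ i : Fin p, i ∈ mid ↔ ((i : ℕ) ≠ 0 ∧ (i : ℕ) ≠ p - 1) := by
    intro i
    simp only [hmid, Finset.mem_erase, Finset.mem_univ, and_true, Ne, Fin.ext_iff, hZ, hL]
    tauto
  have hcardmid : ((mid.card : ℕ) : ℝ) = (p : ℝ) - 2 := by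
    rw [hmid, Finset.card_erase_of_mem hLmem, Finset.card_erase_of_mem (Finset.mem_univ Z),
      Finset.card_univ, Fintype.card_fin]
    rw [← hcp]
    norm_num
    omega
  have hsplit : ∀ g : Fin p → ℝ, ∑ i', g i' = (∑ i' ∈ mid, g i' + g L) + g Z := by
    intro g
    rw [hmid, Finset.sum_erase_add _ _ hLmem, Finset.sum_erase_add _ _ (Finset.mem_univ Z)]
  refine ascend p (q - k + 1) (dStar p q k) hd hμ u hune fun i => ?_
  rw [hsplit (fun i' => ((min (dStar p q k i) (dStar p q k i') : ℕ) : ℝ) * u i')]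
  have hqk1 : q - k ≤ q - k + 1 := by omega
  have hqk2 : q - k - 1 ≤ q - k := by omega
  have hqk3 : q - k - 1 ≤ q - k + 1 := by omega
  rcases eq_or_ne (i : ℕ) 0 with hi0 | hi0
  · have hiZ : i = Z := Fin.ext (by simpa [hZ] using hi0)
    have hdi : dStar p q k i = q - k + 1 := by rw [hiZ]; exact hdZ
    have hmidsum : ∑ i' ∈ mid, ((min (dStar p q k i) (dStar p q k i') : ℕ) : ℝ) * u i'
        = ((p : ℝ) - 2) * (T * (μ - 1)) := by
      rw [Finset.sum_congr rfl (fun j hj => ?_), Finset.sum_const, nsmul_eq_mul, hcardmid]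
      obtain ⟨hj1, hj2⟩ := (hmidmem j).mp hj
      rw [hdi, hdmid j hj1 hj2, humid j hj1 hj2, min_eq_right hqk1, hT]
    rw [hmidsum, hdi, hdL, hdZ, min_eq_right hqk3, min_self, huL, huZ, hiZ, huZ, hc1, hc2]
    linear_combination -hzzT
  · rcases eq_or_ne (i : ℕ) (p - 1) with hiL | hiL
    · have hiL' : i = L := Fin.ext (by simpa [hL] using hiL)
      have hdi : dStar p q k i = q - k - 1 := by rw [hiL']; exact hdL
      have hmidsum : ∑ i' ∈ mid, ((min (dStar p q k i) (dStar p q k i') : ℕ) : ℝ) * u i'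
          = ((p : ℝ) - 2) * ((T - 1) * (μ - 1)) := by
        rw [Finset.sum_congr rfl (fun j hj => ?_), Finset.sum_const, nsmul_eq_mul, hcardmid]
        obtain ⟨hj1, hj2⟩ := (hmidmem j).mp hj
        rw [hdi, hdmid j hj1 hj2, humid j hj1 hj2, min_eq_left hqk2, hc2]
      rw [hmidsum, hdi, hdL, hdZ, min_eq_left hqk3, min_self, huL, huZ, hiL', huL, hc2]
      have h2 : (T - 1) * (μ * zz)
          = (T - 1) * ((((p:ℝ) - 2) * ((T - 1) * (μ - 1)) + (T - 1) * zz) + (T - 1) * μ) := by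
        linear_combination hroot + (μ - (T - 1)) * hzzT
      exact mul_left_cancel₀ hT1 h2
    · have hdi : dStar p q k i = q - k := hdmid i hi0 hiL
      have hmidsum : ∑ i' ∈ mid, ((min (dStar p q k i) (dStar p q k i') : ℕ) : ℝ) * u i'
          = ((p : ℝ) - 2) * (T * (μ - 1)) := by
        rw [Finset.sum_congr rfl (fun j hj => ?_), Finset.sum_const, nsmul_eq_mul, hcardmid]
        obtain ⟨hj1, hj2⟩ := (hmidmem j).mp hj
        rw [hdi, hdmid j hj1 hj2, humid j hj1 hj2, min_self, hT]
      rw [hmidsum, hdi, hdL, hdZ, min_eq_left hqk1, min_eq_right hqk2, huL, huZ,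
        humid i hi0 hiL, hc2, ← hT]
      linear_combination -hzzT

/-! ### Scalar analysis -/

noncomputable def c1f (P T Bb : ℝ) : ℝ := (P - 1) * (T + Bb) + (T - Bb * (P - 1))
noncomputable def c0f (P T Bb : ℝ) : ℝ :=
  (P - 1) * (T - Bb * (P - 1)) * ((T + Bb) - (T - Bb * (P - 1)))
noncomputable def Df (P T Bb : ℝ) : ℝ := (c1f P T Bb) ^ 2 - 4 * c0f P T Bb
noncomputable def rf (P T Bb : ℝ) : ℝ := (c1f P T Bb + Real.sqrt (Df P T Bb)) / 2
noncomputable def phif (P T x : ℝ) : ℝ :=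
  x ^ 3 - P * T * x ^ 2 + (2 * P * T - P - 2 * T) * x - (P - 2) * (T - 1)

section scalars
variable {P T Bb : ℝ} (hP : 3 ≤ P) (hB : 1 ≤ Bb) (hT : Bb * (P - 1) + 3 ≤ T)

include hP hB hT

lemma hs3 : 3 ≤ T - Bb * (P - 1) := by linarith

lemma hD0 : 0 ≤ Df P T Bb := by
  unfold Df c1f c0f
  nlinarith [sq_nonneg ((P - 1) * (T + Bb) - (T - Bb * (P - 1))),
    sq_nonneg (T - Bb * (P - 1)), hs3 hP hB hT]

lemma hc1pos : c1f P T Bb = P * T ∧ 0 < P * T := by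
  constructor
  · unfold c1f; ring
  · have h2 : (2:ℝ) ≤ P - 1 := by linarith
    have h3 : (1:ℝ) * 2 ≤ Bb * (P - 1) :=
      mul_le_mul hB h2 (by norm_num) (by linarith)
    nlinarith

lemma quad_le {x : ℝ} (hx : x ^ 2 - c1f P T Bb * x + c0f P T Bb = 0) : x ≤ rf P T Bb := by
  have hD := hD0 hP hB hT
  have h1 : (2 * x - c1f P T Bb) ^ 2 = Df P T Bb := by unfold Df; linear_combination 4 * hx
  have h2 : 2 * x - c1f P T Bb ≤ Real.sqrt (Df P T Bb) := by
    calc 2 * x - c1f P T Bb ≤ |2 * x - c1f P T Bb| := le_abs_self _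
      _ = Real.sqrt ((2 * x - c1f P T Bb) ^ 2) := (Real.sqrt_sq_eq_abs _).symm
      _ = Real.sqrt (Df P T Bb) := by rw [h1]
  unfold rf
  linarith

lemma r_pos : 0 < rf P T Bb := by
  have h1 := (hc1pos hP hB hT).1
  have h2 := (hc1pos hP hB hT).2
  have := Real.sqrt_nonneg (Df P T Bb)
  unfold rf
  linarith

lemma r_lt : rf P T Bb < P * T := by
  obtain ⟨h1, h2⟩ := hc1pos hP hB hT
  have hc0 : 0 < c0f P T Bb := by
    unfold c0f
    have h3 := hs3 hP hB hT
    have h4 : (0:ℝ) < P - 1 := by linarith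
    have h5 : (0:ℝ) < T + Bb - (T - Bb * (P - 1)) := by nlinarith
    exact mul_pos (mul_pos h4 (by linarith)) h5
  have hsq : Real.sqrt (Df P T Bb) < c1f P T Bb := by
    have hlt : Df P T Bb < (c1f P T Bb) ^ 2 := by unfold Df; linarith
    calc Real.sqrt (Df P T Bb) < Real.sqrt ((c1f P T Bb) ^ 2) :=
          Real.sqrt_lt_sqrt (hD0 hP hB hT) hlt
      _ = |c1f P T Bb| := Real.sqrt_sq_eq_abs _
      _ = c1f P T Bb := abs_of_pos (by rw [h1]; exact h2)
  unfold rf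
  rw [h1] at hsq ⊢
  linarith

lemma phi_r_neg : phif P T (rf P T Bb) < 0 := by
  have hψ : (rf P T Bb) ^ 2 - c1f P T Bb * rf P T Bb + c0f P T Bb = 0 := by
    have hsq : Real.sqrt (Df P T Bb) ^ 2 = Df P T Bb := Real.sq_sqrt (hD0 hP hB hT)
    unfold rf Df
    unfold Df at hsq
    linear_combination (1 / 4) * hsq
  have hid : phif P T (rf P T Bb)
      = (-T * (P - 1) * (P * Bb - 2) + P * Bb ^ 2 * (P - 1) ^ 2 - P) * rf P T Bb
        + (-(P - 2) * (T - 1)) := by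
    unfold phif
    unfold c1f c0f at hψ
    linear_combination (rf P T Bb) * hψ
  have halpha : -T * (P - 1) * (P * Bb - 2) + P * Bb ^ 2 * (P - 1) ^ 2 - P < 0 := by
    nlinarith [mul_nonneg (mul_nonneg (by linarith : (0:ℝ) ≤ T - Bb * (P - 1) - 3)
      (by linarith : (0:ℝ) ≤ P - 1)) (by nlinarith : (0:ℝ) ≤ P * Bb - 2)]
  have hbeta : -(P - 2) * (T - 1) < 0 := by
    have hT3 : 3 ≤ T := by
      nlinarith [mul_nonneg (by linarith : (0:ℝ) ≤ Bb) (by linarith : (0:ℝ) ≤ P - 1)]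
    nlinarith
  have hr := r_pos hP hB hT
  nlinarith [mul_pos (neg_pos.mpr halpha) hr]

lemma phi_PT_pos : 0 < phif P T (P * T) := by
  unfold phif
  have h2 : (2:ℝ) ≤ P - 1 := by linarith
  have h3 : (1:ℝ) * 2 ≤ Bb * (P - 1) := mul_le_mul hB h2 (by norm_num) (by linarith)
  have hT5 : 5 ≤ T := by linarith
  have h1 : (0:ℝ) < T - 1 := by linarith
  have hp2 : (0:ℝ) ≤ P - 2 := by linarith
  nlinarith [mul_pos h1 (show (0:ℝ) < P * P * T - P + 2 by nlinarith),
    mul_nonneg (mul_nonneg hp2 (by linarith : (0:ℝ) ≤ T)) (by nlinarith : (0:ℝ) ≤ P * T)]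

lemma root_exists : ∃ μ : ℝ, rf P T Bb < μ ∧ μ ≤ P * T ∧ phif P T μ = 0 := by
  have hcont : Continuous (fun x => phif P T x) := by
    unfold phif; continuity
  have hle : rf P T Bb ≤ P * T := (r_lt hP hB hT).le
  have hsub := intermediate_value_Icc hle hcont.continuousOn
  have h0 : (0 : ℝ) ∈ Set.Icc (phif P T (rf P T Bb)) (phif P T (P * T)) :=
    ⟨(phi_r_neg hP hB hT).le, (phi_PT_pos hP hB hT).le⟩
  obtain ⟨μ, hμmem, hμ0⟩ := hsub h0
  have hφμ : phif P T μ = 0 := hμ0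
  refine ⟨μ, ?_, hμmem.2, hφμ⟩
  rcases eq_or_lt_of_le hμmem.1 with h | h
  · exfalso
    rw [← h] at hφμ
    have := phi_r_neg hP hB hT
    linarith
  · exact h

end scalars

theorem stmt14 (p q k e : ℕ) (hp : 2 < p) (hk : 0 < k) (hq : k * p + 2 < q)
    (he : e = p * (q - k)) :
    ∀ a : ℕ, a < k →
      specRad (adjD p (q - k + 1) (dStar p q k)) > specRad (adjD p (q - a) (dKa p q k a)) := by
  intro a ha
  -- natural number facts
  have hq3 : k * p + 3 ≤ q := hq
  have hkkp : k ≤ k * p := Nat.le_mul_of_pos_right k (by omega)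
  have hkq : k ≤ q := le_trans hkkp (le_trans (Nat.le_add_right _ 3) hq3)
  have haq : a ≤ q := le_trans ha.le hkq
  have f1 : (k - a) * p + a * p = k * p := by
    rw [← Nat.add_mul, Nat.sub_add_cancel ha.le]
  have f2 : a ≤ a * p := Nat.le_mul_of_pos_right a (by omega)
  have hle2 : (k - a) * p ≤ q - a := by
    have h5 : (k - a) * p + a ≤ (k - a) * p + a * p := Nat.add_le_add_left f2 _
    have h7 : (k - a) * p + a ≤ k * p := by rw [← f1]; exact h5
    have h8 : (k - a) * p + a ≤ q := le_trans h7 (le_trans (Nat.le_add_right _ 3) hq3)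
    exact Nat.le_sub_of_add_le h8
  -- real abbreviations
  set P : ℝ := (p : ℝ) with hPdef
  set T : ℝ := ((q - k : ℕ) : ℝ) with hTdef
  set Bb : ℝ := ((k - a : ℕ) : ℝ) with hBdef
  have hP3 : (3:ℝ) ≤ P := by rw [hPdef]; exact_mod_cast hp
  have hB1 : (1:ℝ) ≤ Bb := by rw [hBdef]; exact_mod_cast (by omega : 1 ≤ k - a)
  have hTB : Bb * (P - 1) + 3 ≤ T := by
    rw [hPdef, hTdef, hBdef, Nat.cast_sub hkq, Nat.cast_sub ha.le]
    have h1 : ((k * p : ℕ) : ℝ) + 3 ≤ (q : ℝ) := by exact_mod_cast hq3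
    push_cast at h1
    have h2 : (0:ℝ) ≤ (a : ℝ) := Nat.cast_nonneg a
    have h3 : (a : ℝ) + 1 ≤ (k : ℝ) := by exact_mod_cast ha
    have h4 : (3:ℝ) ≤ (p : ℝ) := by exact_mod_cast hp
    nlinarith [mul_nonneg h2 (by linarith : (0:ℝ) ≤ (p:ℝ) - 1)]
  -- cast identities for the degrees
  have hmcast : T + Bb = ((q - a : ℕ) : ℝ) := by
    rw [hTdef, hBdef, show q - a = (q - k) + (k - a) from by omega, Nat.cast_add]
  have hscast : T - Bb * (P - 1) = ((q - a - (k - a) * p : ℕ) : ℝ) := by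
    rw [Nat.cast_sub hle2, Nat.cast_mul, ← hmcast, ← hBdef, ← hPdef]
    ring
  -- the cubic root μ
  obtain ⟨μ, hrμ, hμPT, hφμ⟩ := root_exists hP3 hB1 hTB
  have hrpos := r_pos hP3 hB1 hTB
  have hμpos : 0 < μ := lt_trans hrpos hrμ
  have hqk5 : 5 ≤ q - k := by
    have h5 : (5:ℝ) ≤ T := by
      have h2 : (2:ℝ) ≤ P - 1 := by linarith
      have h3 : (1:ℝ) * 2 ≤ Bb * (P - 1) := mul_le_mul hB1 h2 (by norm_num) (by linarith)
      linarith
    rw [hTdef] at h5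
    exact_mod_cast h5
  have hroot : μ ^ 3 - (p : ℝ) * T * μ ^ 2 + (2 * (p : ℝ) * T - (p : ℝ) - 2 * T) * μ
      - ((p : ℝ) - 2) * (T - 1) = 0 := by
    unfold phif at hφμ
    exact hφμ
  have hspecStar := star_eigen p q k hp hqk5 hμpos T hTdef hroot
  have hgeStar : Real.sqrt μ ≤ specRad (adjD p (q - k + 1) (dStar p q k)) :=
    le_csSup (spec_bddAbove _) hspecStar
  have hubKa : specRad (adjD p (q - a) (dKa p q k a)) ≤ Real.sqrt (rf P T Bb) := by
    apply Real.sSup_le _ (Real.sqrt_nonneg _)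
    intro lam hlam
    rcases le_or_gt lam 0 with h0 | h0
    · exact h0.trans (Real.sqrt_nonneg _)
    · have hquad := Ka_eigen p q k a hp h0 (T + Bb) (T - Bb * (P - 1)) hmcast hscast hlam
      have hx : (lam ^ 2) ^ 2 - c1f P T Bb * lam ^ 2 + c0f P T Bb = 0 := by
        unfold c1f c0f
        linear_combination hquad
      have hle := quad_le hP3 hB1 hTB hx
      calc lam = Real.sqrt (lam ^ 2) := (Real.sqrt_sq h0.le).symm
        _ ≤ Real.sqrt (rf P T Bb) := Real.sqrt_le_sqrt hle
  have hlt : Real.sqrt (rf P T Bb) < Real.sqrt μ := Real.sqrt_lt_sqrt hrpos.le hrμ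
  exact lt_of_le_of_lt hubKa (lt_of_lt_of_le hlt hgeStar)
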